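/- A locally decisive computation has exactly one source pool in its pool graph. -/

import Mathlib

/-!
Journeys compose (a journey followed by infinitely many journeys gives a journey), so the pool
relation is an equivalence and pools are its classes. Every miner outside `P` receives the
blocks of the branch mined in `P` after every round; as there are finitely many miners, one
miner of `P` reaches it infinitely often. Hence no outside miner reaches `P` infinitely often
(it would be pool-related to `P`), so `P` is a source, and any source pool must contain the
miner of `P` that reaches one of its members infinitely often, so it is `P`.
-/

/-- A journey from `m` to `m'` starting after round `r`: a nonempty temporal path of links
occurring in strictly increasing rounds, all after `r`. -/
def Journey {M : Type} (link : ℕ → M → M → Prop) (r : ℕ) (m m' : M) : Prop :=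
  ∃ (k : ℕ) (f : ℕ → M) (t : ℕ → ℕ),
    0 < k ∧ f 0 = m ∧ f k = m' ∧
    (∀ i, i < k → link (t i) (f i) (f (i + 1))) ∧
    (∀ i, i < k → r < t i) ∧
    (∀ i j, i < j → j < k → t i < t j)

/-- `m` has infinitely many journeys to `m'`: journeys starting arbitrarily late. -/
def InfJ {M : Type} (link : ℕ → M → M → Prop) (m m' : M) : Prop :=
  ∀ r : ℕ, Journey link r m m'

/-- The pool relation: equal, or infinitely many journeys in both directions. -/
def PoolRel {M : Type} (link : ℕ → M → M → Prop) (m m' : M) : Prop :=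
  m = m' ∨ (InfJ link m m' ∧ InfJ link m' m)

/-- A mining pool: an equivalence class of the pool relation. -/
def IsPool {M : Type} (link : ℕ → M → M → Prop) (P : Set M) : Prop :=
  ∃ m : M, P = {m' | PoolRel link m m'}

/-- Pool-graph edge: infinitely many rounds contain a link from `P1` to `P2`. -/
def PoolEdge {M : Type} (link : ℕ → M → M → Prop) (P1 P2 : Set M) : Prop :=
  ∀ r : ℕ, ∃ ρ, r < ρ ∧ ∃ m1 ∈ P1, ∃ m2 ∈ P2, link ρ m1 m2

/-- Edge of the pool graph (between pools). -/
def PGEdge {M : Type} (link : ℕ → M → M → Prop) (P1 P2 : Set M) : Prop :=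
  IsPool link P1 ∧ IsPool link P2 ∧ PoolEdge link P1 P2

/-- A source pool: a pool with only finitely many journeys from outside miners into it,
i.e. no outside miner has infinitely many journeys to a pool member. -/
def SourcePool {M : Type} (link : ℕ → M → M → Prop) (P : Set M) : Prop :=
  IsPool link P ∧ ∀ m, m ∉ P → ∀ m' ∈ P, ¬ InfJ link m m'

theorem Journey.of_le {M : Type} {link : ℕ → M → M → Prop} {r r' : ℕ} {a b : M}
    (h : r ≤ r') (hj : Journey link r' a b) : Journey link r a b := by
  obtain ⟨k, g, t, hk, h0, hk', hlink, hlate, hinc⟩ := hj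
  exact ⟨k, g, t, hk, h0, hk', hlink, fun i hi => h.trans_lt (hlate i hi), hinc⟩

/-- The second journey is chosen to start after the last link of the first, so the two
concatenate. -/
theorem Journey.trans_infJ {M : Type} {link : ℕ → M → M → Prop} {r : ℕ} {a b c : M}
    (hab : Journey link r a b) (hbc : InfJ link b c) : Journey link r a c := by
  obtain ⟨k, g, t, hk, h0, hk', hlink, hlate, hinc⟩ := hab
  obtain ⟨l, g', t', hl, h0', hl', hlink', hlate', hinc'⟩ := hbc (t (k - 1))
  have hlast : ∀ i < k, t i ≤ t (k - 1) := fun i hi =>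
    (eq_or_lt_of_le (show i ≤ k - 1 by omega)).elim (fun h => h ▸ le_rfl)
      fun h => (hinc i _ h (by omega)).le
  refine ⟨k + l, fun i => if i < k then g i else g' (i - k),
    fun i => if i < k then t i else t' (i - k), by omega, by simp [hk, h0], ?_, ?_, ?_, ?_⟩
  · simp [hl', show ¬ k + l < k by omega]
  · intro i hi
    by_cases hik : i + 1 < k
    · simpa [show i < k by omega, hik] using hlink i (by omega)
    by_cases hi' : i < k
    · have hik : i + 1 = k := by omega
      simpa [hi', hik, h0', ← hk'] using hlink i hi'
    · simpa [hi', hik, show i + 1 - k = i - k + 1 by omega] using hlink' (i - k) (by omega)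
  · intro i hi
    by_cases hik : i < k
    · simpa [hik] using hlate i hik
    · simpa [hik] using (hlate (k - 1) (by omega)).trans (hlate' (i - k) (by omega))
  · intro i j hij hj
    by_cases hjk : j < k
    · simpa [show i < k by omega, hjk] using hinc i j hij hjk
    by_cases hik : i < k
    · simpa [hik, hjk] using (hlast i hik).trans_lt (hlate' (j - k) (by omega))
    · simpa [hik, hjk] using hinc' (i - k) (j - k) (by omega) (by omega)

theorem InfJ.trans {M : Type} {link : ℕ → M → M → Prop} {a b c : M}
    (hab : InfJ link a b) (hbc : InfJ link b c) : InfJ link a c :=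
  fun r => (hab r).trans_infJ hbc

theorem exists_infJ_of_forall_journey {M : Type} [Finite M] {link : ℕ → M → M → Prop}
    {S : Set M} {b : M} (h : ∀ r, ∃ a ∈ S, Journey link r a b) : ∃ a ∈ S, InfJ link a b := by
  by_contra! hnone
  have hlate : ∀ a, ∃ r, a ∈ S → ¬ Journey link r a b := fun a => by
    by_cases ha : a ∈ S
    · simpa [InfJ, ha] using hnone a ha
    · exact ⟨0, fun h => (ha h).elim⟩
  choose R hR using hlate
  obtain ⟨N, hN⟩ := Finite.exists_le R
  obtain ⟨a, ha, hj⟩ := h N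
  exact hR a ha (hj.of_le (hN a))

namespace PoolRel

variable {M : Type} {link : ℕ → M → M → Prop} {a b c : M}

theorem symm (h : PoolRel link a b) : PoolRel link b a :=
  h.elim (fun h => Or.inl h.symm) fun h => Or.inr h.symm

theorem trans_infJ (hab : PoolRel link a b) (hbc : InfJ link b c) : InfJ link a c :=
  hab.elim (fun h => h ▸ hbc) fun h => h.1.trans hbc

theorem _root_.InfJ.trans_poolRel (hab : InfJ link a b) (hbc : PoolRel link b c) :
    InfJ link a c :=
  hbc.elim (fun h => h ▸ hab) fun h => hab.trans h.1

theorem trans (hab : PoolRel link a b) (hbc : PoolRel link b c) : PoolRel link a c :=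
  hab.elim (fun h => h ▸ hbc) fun h =>
    Or.inr ⟨h.1.trans_poolRel hbc, hbc.symm.trans_infJ h.2⟩

end PoolRel

namespace IsPool

variable {M : Type} {link : ℕ → M → M → Prop} {P Q : Set M} {a b : M}

theorem nonempty (hP : IsPool link P) : P.Nonempty := by
  obtain ⟨c, rfl⟩ := hP
  exact ⟨c, Or.inl rfl⟩

theorem poolRel_of_mem (hP : IsPool link P) (ha : a ∈ P) (hb : b ∈ P) : PoolRel link a b := by
  obtain ⟨c, rfl⟩ := hP
  exact PoolRel.trans (PoolRel.symm ha) hb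

theorem mem_of_poolRel (hP : IsPool link P) (ha : a ∈ P) (hab : PoolRel link a b) : b ∈ P := by
  obtain ⟨c, rfl⟩ := hP
  exact PoolRel.trans ha hab

theorem eq_of_mem_of_mem (hP : IsPool link P) (hQ : IsPool link Q) (hPa : a ∈ P) (hQa : a ∈ Q) :
    P = Q := by
  ext b
  exact ⟨fun hb => hQ.mem_of_poolRel hQa (hP.poolRel_of_mem hPa hb),
    fun hb => hP.mem_of_poolRel hPa (hQ.poolRel_of_mem hQa hb)⟩

/-- A miner outside `P` reached infinitely often from `P` and reaching `P` infinitely often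
would be pool-related to `P`. -/
theorem sourcePool_of_forall_infJ (hP : IsPool link P)
    (hreach : ∀ b ∉ P, ∃ a ∈ P, InfJ link a b) : SourcePool link P := by
  refine ⟨hP, fun b hb c hc hbc => hb ?_⟩
  obtain ⟨a, ha, hab⟩ := hreach b hb
  exact hP.mem_of_poolRel ha (Or.inr ⟨hab, hbc.trans_poolRel (hP.poolRel_of_mem hc ha)⟩)

end IsPool

/-- A source pool `Q` meets `P`: if its member `q` lies outside `P`, the miner of `P`
reaching `q` infinitely often must itself lie in `Q`. -/
theorem SourcePool.eq_of_forall_infJ {M : Type} {link : ℕ → M → M → Prop} {P Q : Set M}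
    (hQ : SourcePool link Q) (hP : IsPool link P) (hreach : ∀ b ∉ P, ∃ a ∈ P, InfJ link a b) :
    Q = P := by
  obtain ⟨hQpool, hsrc⟩ := hQ
  obtain ⟨q, hq⟩ := hQpool.nonempty
  by_cases hqP : q ∈ P
  · exact hQpool.eq_of_mem_of_mem hP hq hqP
  obtain ⟨a, haP, haq⟩ := hreach q hqP
  exact hQpool.eq_of_mem_of_mem hP (by_contra fun ha => hsrc a ha q hq haq) haP

/-- A locally decisive computation has exactly one source pool. The unique
infinite branch `f` (miners `mnr`, strictly increasing mining rounds `mt`) belongs to a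
pool `P`, and every miner receives every block of the branch (via a journey from the
mining miner after the mining round). Conclusion: there is exactly one source pool. -/
theorem stmt_13 {M B : Type} [Fintype M] (link : ℕ → M → M → Prop)
    (f : ℕ → B) (mnr : B → M) (mt : B → ℕ)
    (hmono : StrictMono (fun n => mt (f n)))
    (P : Set M) (hP : IsPool link P)
    (hbelong : ∃ n0 : ℕ, ∀ n, n0 ≤ n → mnr (f n) ∈ P)
    (hrecv : ∀ n : ℕ, ∀ m : M, m ≠ mnr (f n) → Journey link (mt (f n)) (mnr (f n)) m) :
    ∃ SP : Set M, SourcePool link SP ∧ ∀ Q : Set M, SourcePool link Q → Q = SP := by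
  obtain ⟨n0, hn0⟩ := hbelong
  have hreach : ∀ m ∉ P, ∃ a ∈ P, InfJ link a m := fun m hm =>
    exists_infJ_of_forall_journey fun r => by
      have hn : n0 ≤ max n0 r := le_max_left n0 r
      refine ⟨_, hn0 _ hn, (hrecv _ m fun h => hm (h ▸ hn0 _ hn)).of_le ?_⟩
      exact (le_max_right n0 r).trans hmono.le_apply
  exact ⟨P, hP.sourcePool_of_forall_infJ hreach, fun Q hQ => hQ.eq_of_forall_infJ hP hreach⟩
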